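/- Let G be a group acting distally and minimally by homeomorphisms on compact metric spaces X and Y, and let f : X → Y be a continuous surjection which is G-equivariant (f(gx) = g f(x) for all g ∈ G, x ∈ X). Then f is an open map. -/
import Mathlib

/-- The group of self-homeomorphisms of a topological space, under composition. -/
instance Homeomorph.instGroupSelf {X : Type*} [TopologicalSpace X] : Group (X ≃ₜ X) where
  mul a b := b.trans a
  one := Homeomorph.refl X
  inv := Homeomorph.symm
  mul_assoc _ _ _ := rfl
  one_mul a := Homeomorph.ext fun _ => rfl
  mul_one a := Homeomorph.ext fun _ => rfl
  inv_mul_cancel a := Homeomorph.ext fun x => a.symm_apply_apply x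

/-- Auxiliary: a nonempty compact set of pairs of self-maps closed under (componentwise)
composition contains an idempotent. -/
lemma exists_idem_pair {X Y : Type*} [TopologicalSpace X] [TopologicalSpace Y]
    [T2Space X] [T2Space Y]
    (s : Set ((X → X) × (Y → Y))) (hne : s.Nonempty) (hcomp : IsCompact s)
    (hmul : ∀ a ∈ s, ∀ b ∈ s, ((a.1 ∘ b.1, a.2 ∘ b.2) : (X → X) × (Y → Y)) ∈ s) :
    ∃ m ∈ s, m.1 ∘ m.1 = m.1 ∧ m.2 ∘ m.2 = m.2 := by
  letI : Semigroup ((X → X) × (Y → Y)) :=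
    { mul := fun a b => (a.1 ∘ b.1, a.2 ∘ b.2)
      mul_assoc := fun _ _ _ => rfl }
  have hcml : ∀ r : (X → X) × (Y → Y), Continuous (· * r) := by
    intro r
    show Continuous fun z : (X → X) × (Y → Y) => ((z.1 ∘ r.1, z.2 ∘ r.2) : (X → X) × (Y → Y))
    refine Continuous.prodMk ?_ ?_
    · exact continuous_pi fun x => (continuous_apply (r.1 x)).comp continuous_fst
    · exact continuous_pi fun y => (continuous_apply (r.2 y)).comp continuous_snd
  obtain ⟨m, hm, hidem⟩ :=
    exists_idempotent_in_compact_subsemigroup hcml s hne hcomp hmul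
  exact ⟨m, hm, congrArg Prod.fst hidem, congrArg Prod.snd hidem⟩

/-- A factor map (equivariant continuous surjection) between distal minimal actions
of a group `G` by homeomorphisms on compact metric spaces is an open map. -/
theorem distal_minimal_factor_isOpenMap
    (G : Type*) [Group G]
    (X : Type*) [MetricSpace X] [CompactSpace X]
    (Y : Type*) [MetricSpace Y] [CompactSpace Y]
    (φ : G →* (X ≃ₜ X)) (ψ : G →* (Y ≃ₜ Y))
    -- distality of both actions
    (hXdistal : ∀ x x' : X, x ≠ x' → 0 < ⨅ g : G, dist (φ g x) (φ g x'))
    (hYdistal : ∀ y y' : Y, y ≠ y' → 0 < ⨅ g : G, dist (ψ g y) (ψ g y'))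
    -- minimality of both actions
    (hXmin : ∀ x : X, Dense (Set.range fun g : G => φ g x))
    (hYmin : ∀ y : Y, Dense (Set.range fun g : G => ψ g y))
    -- `f` is a factor map (a homomorphism of actions)
    (f : X → Y) (hf : Continuous f) (hsurj : Function.Surjective f)
    (hequiv : ∀ (g : G) (x : X), f (φ g x) = ψ g (f x)) :
    IsOpenMap f := by
  classical
  -- the "joint Ellis semigroup"
  set Φ : G → (X → X) × (Y → Y) := fun g => (⇑(φ g), ⇑(ψ g)) with hΦ
  set E : Set ((X → X) × (Y → Y)) := closure (Set.range Φ) with hE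
  have hEclosed : IsClosed E := isClosed_closure
  have hEcompact : IsCompact E := hEclosed.isCompact
  have hEne : E.Nonempty := ⟨Φ 1, subset_closure ⟨1, rfl⟩⟩
  -- right multiplication is continuous
  have hRcont : ∀ b : (X → X) × (Y → Y),
      Continuous (fun z : (X → X) × (Y → Y) =>
        ((z.1 ∘ b.1, z.2 ∘ b.2) : (X → X) × (Y → Y))) := by
    intro b
    refine Continuous.prodMk ?_ ?_
    · exact continuous_pi fun x => (continuous_apply (b.1 x)).comp continuous_fst
    · exact continuous_pi fun y => (continuous_apply (b.2 y)).comp continuous_snd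
  -- left composition with a group element preserves E
  have hL : ∀ (g : G), ∀ b ∈ E, ((⇑(φ g)) ∘ b.1, (⇑(ψ g)) ∘ b.2) ∈ E := by
    intro g b hb
    have hcont : Continuous (fun z : (X → X) × (Y → Y) =>
        (((⇑(φ g)) ∘ z.1, (⇑(ψ g)) ∘ z.2) : (X → X) × (Y → Y))) := by
      refine Continuous.prodMk ?_ ?_
      · exact continuous_pi fun x =>
          ((φ g).continuous).comp ((continuous_apply x).comp continuous_fst)
      · exact continuous_pi fun y =>
          ((ψ g).continuous).comp ((continuous_apply y).comp continuous_snd)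
    have himg : (fun z : (X → X) × (Y → Y) =>
        (((⇑(φ g)) ∘ z.1, (⇑(ψ g)) ∘ z.2) : (X → X) × (Y → Y))) '' Set.range Φ
        ⊆ Set.range Φ := by
      rintro _ ⟨_, ⟨h, rfl⟩, rfl⟩
      refine ⟨g * h, ?_⟩
      rw [hΦ]
      simp only [map_mul]
      rfl
    have h1 : (((⇑(φ g)) ∘ b.1, (⇑(ψ g)) ∘ b.2) : (X → X) × (Y → Y)) ∈
        closure ((fun z : (X → X) × (Y → Y) =>
          (((⇑(φ g)) ∘ z.1, (⇑(ψ g)) ∘ z.2) : (X → X) × (Y → Y))) '' Set.range Φ) :=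
      image_closure_subset_closure_image hcont ⟨b, hb, rfl⟩
    exact closure_mono himg h1
  -- E is a semigroup under componentwise composition
  have hmulE : ∀ a ∈ E, ∀ b ∈ E, ((a.1 ∘ b.1, a.2 ∘ b.2) : (X → X) × (Y → Y)) ∈ E := by
    intro a ha b hb
    have hclosed : IsClosed {z : (X → X) × (Y → Y) |
        ((z.1 ∘ b.1, z.2 ∘ b.2) : (X → X) × (Y → Y)) ∈ E} := hEclosed.preimage (hRcont b)
    have hsub : Set.range Φ ⊆ {z : (X → X) × (Y → Y) |
        ((z.1 ∘ b.1, z.2 ∘ b.2) : (X → X) × (Y → Y)) ∈ E} := by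
      rintro _ ⟨g, rfl⟩
      exact hL g b hb
    exact closure_minimal hsub hclosed ha
  -- every element of E intertwines f
  have hfE : ∀ z ∈ E, ∀ x, f (z.1 x) = z.2 (f x) := by
    have hclosed : IsClosed {z : (X → X) × (Y → Y) | ∀ x, f (z.1 x) = z.2 (f x)} := by
      have heq : {z : (X → X) × (Y → Y) | ∀ x, f (z.1 x) = z.2 (f x)} =
          ⋂ x, {z : (X → X) × (Y → Y) | f (z.1 x) = z.2 (f x)} := by
        ext z; simp
      rw [heq]
      exact isClosed_iInter fun x => isClosed_eq
        (hf.comp ((continuous_apply x).comp continuous_fst))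
        ((continuous_apply (f x)).comp continuous_snd)
    have hsub : Set.range Φ ⊆ {z : (X → X) × (Y → Y) | ∀ x, f (z.1 x) = z.2 (f x)} := by
      rintro _ ⟨g, rfl⟩ x
      exact hequiv g x
    exact fun z hz => closure_minimal hsub hclosed hz
  -- every element of E is injective in both coordinates (distality)
  have hXsep : ∀ z ∈ E, ∀ a b : X, a ≠ b → 0 < dist (z.1 a) (z.1 b) := by
    intro z hz a b hab
    have hcpos := hXdistal a b hab
    have hcont : Continuous fun w : (X → X) × (Y → Y) => dist (w.1 a) (w.1 b) :=
      Continuous.dist ((continuous_apply a).comp continuous_fst)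
        ((continuous_apply b).comp continuous_fst)
    have hmem : dist (z.1 a) (z.1 b) ∈
        closure ((fun w : (X → X) × (Y → Y) => dist (w.1 a) (w.1 b)) '' Set.range Φ) :=
      image_closure_subset_closure_image hcont ⟨z, hz, rfl⟩
    have hsub : ((fun w : (X → X) × (Y → Y) => dist (w.1 a) (w.1 b)) '' Set.range Φ) ⊆
        Set.Ici (⨅ g : G, dist (φ g a) (φ g b)) := by
      rintro _ ⟨_, ⟨g, rfl⟩, rfl⟩
      have hbdd : BddBelow (Set.range fun g : G => dist (φ g a) (φ g b)) := by
        refine ⟨0, ?_⟩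
        rintro r ⟨g', rfl⟩
        exact dist_nonneg
      exact ciInf_le hbdd g
    have := closure_minimal hsub isClosed_Ici hmem
    exact lt_of_lt_of_le hcpos this
  have hYsep : ∀ z ∈ E, ∀ a b : Y, a ≠ b → 0 < dist (z.2 a) (z.2 b) := by
    intro z hz a b hab
    have hcpos := hYdistal a b hab
    have hcont : Continuous fun w : (X → X) × (Y → Y) => dist (w.2 a) (w.2 b) :=
      Continuous.dist ((continuous_apply a).comp continuous_snd)
        ((continuous_apply b).comp continuous_snd)
    have hmem : dist (z.2 a) (z.2 b) ∈
        closure ((fun w : (X → X) × (Y → Y) => dist (w.2 a) (w.2 b)) '' Set.range Φ) :=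
      image_closure_subset_closure_image hcont ⟨z, hz, rfl⟩
    have hsub : ((fun w : (X → X) × (Y → Y) => dist (w.2 a) (w.2 b)) '' Set.range Φ) ⊆
        Set.Ici (⨅ g : G, dist (ψ g a) (ψ g b)) := by
      rintro _ ⟨_, ⟨g, rfl⟩, rfl⟩
      have hbdd : BddBelow (Set.range fun g : G => dist (ψ g a) (ψ g b)) := by
        refine ⟨0, ?_⟩
        rintro r ⟨g', rfl⟩
        exact dist_nonneg
      exact ciInf_le hbdd g
    have := closure_minimal hsub isClosed_Ici hmem
    exact lt_of_lt_of_le hcpos this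
  -- left inverses in E
  have hleft : ∀ c ∈ E, ∃ d ∈ E, d.1 ∘ c.1 = id ∧ d.2 ∘ c.2 = id := by
    intro c hc
    set S := (fun z : (X → X) × (Y → Y) =>
      ((z.1 ∘ c.1, z.2 ∘ c.2) : (X → X) × (Y → Y))) '' E with hS
    have hSne : S.Nonempty := ⟨_, ⟨c, hc, rfl⟩⟩
    have hScomp : IsCompact S := hEcompact.image (hRcont c)
    have hSmul : ∀ a ∈ S, ∀ b ∈ S, ((a.1 ∘ b.1, a.2 ∘ b.2) : (X → X) × (Y → Y)) ∈ S := by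
      rintro _ ⟨a, ha, rfl⟩ _ ⟨b, hb, rfl⟩
      exact ⟨(a.1 ∘ (c.1 ∘ b.1), a.2 ∘ (c.2 ∘ b.2)),
        hmulE _ ha _ (hmulE _ hc _ hb), rfl⟩
    obtain ⟨m, hmS, hm1, hm2⟩ := exists_idem_pair S hSne hScomp hSmul
    have hmE : m ∈ E := by
      obtain ⟨d, hd, rfl⟩ := hmS
      exact hmulE _ hd _ hc
    have hid1 : ∀ x, m.1 x = x := by
      intro x
      by_contra hne
      have h0 : m.1 (m.1 x) = m.1 x := congrFun hm1 x
      have hpos := hXsep m hmE (m.1 x) x hne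
      rw [h0] at hpos
      simp at hpos
    have hid2 : ∀ y, m.2 y = y := by
      intro y
      by_contra hne
      have h0 : m.2 (m.2 y) = m.2 y := congrFun hm2 y
      have hpos := hYsep m hmE (m.2 y) y hne
      rw [h0] at hpos
      simp at hpos
    obtain ⟨d, hd, hdm⟩ := hmS
    refine ⟨d, hd, ?_, ?_⟩
    · have := congrArg Prod.fst hdm
      funext x
      calc (d.1 ∘ c.1) x = m.1 x := congrFun this x
        _ = x := hid1 x
    · have := congrArg Prod.snd hdm
      funext y
      calc (d.2 ∘ c.2) y = m.2 y := congrFun this y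
        _ = y := hid2 y
  -- two-sided inverses in E
  have hinv : ∀ c ∈ E, ∃ d ∈ E,
      (d.1 ∘ c.1 = id ∧ d.2 ∘ c.2 = id) ∧ (c.1 ∘ d.1 = id ∧ c.2 ∘ d.2 = id) := by
    intro c hc
    obtain ⟨d, hd, hd1, hd2⟩ := hleft c hc
    obtain ⟨e, he, he1, he2⟩ := hleft d hd
    have hc1 : c.1 = e.1 := by
      have h : e.1 ∘ (d.1 ∘ c.1) = (e.1 ∘ d.1) ∘ c.1 := rfl
      rw [hd1, he1] at h
      simpa using h.symm
    have hc2 : c.2 = e.2 := by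
      have h : e.2 ∘ (d.2 ∘ c.2) = (e.2 ∘ d.2) ∘ c.2 := rfl
      rw [hd2, he2] at h
      simpa using h.symm
    exact ⟨d, hd, ⟨hd1, hd2⟩, ⟨hc1 ▸ he1, hc2 ▸ he2⟩⟩
  -- minimality of Y: E acts transitively on Y in the second coordinate
  have htrans : ∀ y₀ y : Y, ∃ z ∈ E, z.2 y₀ = y := by
    intro y₀ y
    have hcont : Continuous fun z : (X → X) × (Y → Y) => z.2 y₀ :=
      (continuous_apply y₀).comp continuous_snd
    have hTcomp : IsCompact ((fun z : (X → X) × (Y → Y) => z.2 y₀) '' E) :=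
      hEcompact.image hcont
    have hsub : Set.range (fun g : G => ψ g y₀) ⊆
        (fun z : (X → X) × (Y → Y) => z.2 y₀) '' E := by
      rintro _ ⟨g, rfl⟩
      exact ⟨Φ g, subset_closure ⟨g, rfl⟩, rfl⟩
    have hdense : Dense ((fun z : (X → X) × (Y → Y) => z.2 y₀) '' E) :=
      (hYmin y₀).mono hsub
    have huniv : (fun z : (X → X) × (Y → Y) => z.2 y₀) '' E = Set.univ := by
      rw [← hTcomp.isClosed.closure_eq]
      exact hdense.closure_eq
    have hy : y ∈ (fun z : (X → X) × (Y → Y) => z.2 y₀) '' E := by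
      rw [huniv]; trivial
    obtain ⟨z, hz, hzy⟩ := hy
    exact ⟨z, hz, hzy⟩
  -- main argument
  intro U hU
  rw [isOpen_iff_mem_nhds]
  rintro _ ⟨x₀, hx₀, rfl⟩
  by_contra hnot
  have hFne : (nhds (f x₀) ⊓ Filter.principal (f '' U)ᶜ).NeBot := by
    rw [Filter.inf_principal_neBot_iff]
    intro V hV
    rw [Set.nonempty_iff_ne_empty]
    intro hempty
    apply hnot
    refine Filter.mem_of_superset hV ?_
    intro v hv
    by_contra hvU
    exact Set.eq_empty_iff_forall_notMem.mp hempty v ⟨hv, hvU⟩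
  choose cc hccE hccy using fun y => htrans (f x₀) y
  set Fl := nhds (f x₀) ⊓ Filter.principal (f '' U)ᶜ with hFl
  haveI := hFne
  have hmapE : Filter.map cc Fl ≤ Filter.principal E := by
    rw [Filter.le_principal_iff, Filter.mem_map]
    exact Filter.univ_mem' fun y => hccE y
  obtain ⟨e, heE, hecluster⟩ := hEcompact.exists_clusterPt hmapE
  -- e fixes f x₀ in the second coordinate
  have hey : e.2 (f x₀) = f x₀ := by
    have hcont : Continuous fun z : (X → X) × (Y → Y) => z.2 (f x₀) :=
      (continuous_apply (f x₀)).comp continuous_snd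
    have h1 : ClusterPt (e.2 (f x₀))
        (Filter.map (fun z : (X → X) × (Y → Y) => z.2 (f x₀)) (Filter.map cc Fl)) :=
      hecluster.map hcont.continuousAt Filter.tendsto_map
    have h2 : Filter.map (fun z : (X → X) × (Y → Y) => z.2 (f x₀)) (Filter.map cc Fl)
        = Fl := by
      rw [Filter.map_map]
      have heqid : ((fun z : (X → X) × (Y → Y) => z.2 (f x₀)) ∘ cc) = id := funext hccy
      rw [heqid, Filter.map_id]
    rw [h2] at h1
    have h3 : ClusterPt (e.2 (f x₀)) (nhds (f x₀)) := h1.mono inf_le_left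
    exact eq_of_nhds_neBot h3
  obtain ⟨d, hdE, ⟨hd1, hd2⟩, ⟨hd1', hd2'⟩⟩ := hinv e heE
  set z := d.1 x₀ with hzdef
  have hfz : f z = f x₀ := by
    have h1 : f z = d.2 (f x₀) := hfE d hdE x₀
    rw [h1]
    conv_lhs => rw [← hey]
    exact congrFun hd2 (f x₀)
  have hez : e.1 z = x₀ := congrFun hd1' x₀
  have hWmem : {w : (X → X) × (Y → Y) | w.1 z ∈ U} ∈ nhds e := by
    refine (hU.preimage ((continuous_apply z).comp continuous_fst)).mem_nhds ?_
    show e.1 z ∈ U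
    rw [hez]; exact hx₀
  have hGmem : cc '' (f '' U)ᶜ ∈ Filter.map cc Fl :=
    Filter.image_mem_map (Filter.mem_inf_of_right (Filter.mem_principal_self _))
  haveI : (nhds e ⊓ Filter.map cc Fl).NeBot := hecluster
  obtain ⟨w, hwW, hwI⟩ := Filter.nonempty_of_mem
    (Filter.inter_mem (Filter.mem_inf_of_left hWmem) (Filter.mem_inf_of_right hGmem))
  obtain ⟨yv, hyv, rfl⟩ := hwI
  apply hyv
  refine ⟨(cc yv).1 z, hwW, ?_⟩
  rw [hfE _ (hccE yv) z, hfz, hccy yv]
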